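/- Let R ∈ (0,∞) and M be an Orlicz function. Then lim_{d→∞} (1/d)·log vol_d(B_M^d(dR)) = φ(α*) - α*·R, where φ(α) = log ∫_ℝ exp(α·M(x)) dx and α* < 0 is the unique solution of φ'(α*) = R. Equivalently, vol_d(B_M^d(dR))^{1/d} → exp(φ(α*) - α*·R) as d → ∞. -/

import Mathlib

open MeasureTheory Filter

def IsOrlicz (M : ℝ → ℝ) : Prop :=
  ConvexOn ℝ Set.univ M ∧ (∀ t, M (-t) = M t) ∧ M 0 = 0 ∧ ∀ t ≠ 0, 0 < M t

/-!
Tilt Lebesgue measure on `ℝ` by the density `exp (α* M x) / Z`, `Z = ∫ exp (α* M)`. Under the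
`d`-fold product of the tilted measure the coordinates are i.i.d. with mean `φ'(α*) = R`, and the
product measure has density `exp (α* ∑ M (x i)) / Z ^ d` with respect to Lebesgue measure.
Since `α* < 0`, this density is at least `exp (α* d R) / Z ^ d` on `B(dR)`, and the product
measure has mass at most `1`: this is the upper bound `vol B(dR) ≤ exp (d (φ(α*) - α* R))`.
For the lower bound, Chebyshev's inequality gives mass at least `1/2` to the shell
`|∑ M (x i) - d R| < d δ` once `d` is large; there the density is at most
`exp (α* d (R - δ)) / Z ^ d`, and the shell lies in `B(d (R + δ))`. Convexity of `M` with
`M 0 = 0` maps `B(d (R + δ))` into `B(dR)` by the homothety of ratio `R / (R + δ)`, which costs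
a factor `(R / (R + δ)) ^ d`; letting `δ → 0` gives the matching lower bound.
-/

open Real ProbabilityTheory Topology
open scoped ENNReal Pointwise

lemma ConvexOn.map_mul_le_of_map_zero {M : ℝ → ℝ} (hM : ConvexOn ℝ Set.univ M) (h0 : M 0 = 0)
    {c : ℝ} (hc0 : 0 ≤ c) (hc1 : c ≤ 1) (x : ℝ) : M (c * x) ≤ c * M x := by
  simpa [h0] using hM.2 (Set.mem_univ x) (Set.mem_univ 0) hc0 (sub_nonneg.2 hc1) (by ring)

lemma integrable_exp_neg_mul_abs {b : ℝ} (hb : 0 < b) :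
    Integrable fun x : ℝ ↦ exp (-b * |x|) := by
  have hIoi : IntegrableOn (fun x : ℝ ↦ exp (-b * |x|)) (Set.Ioi 0) :=
    (exp_neg_integrableOn_Ioi 0 hb).congr_fun (fun x hx ↦ by rw [abs_of_pos hx])
      measurableSet_Ioi
  have hIic : IntegrableOn (fun x : ℝ ↦ exp (-b * |x|)) (Set.Iic 0) := by
    have hneg : MeasurableEmbedding fun x : ℝ ↦ -x := (Homeomorph.neg ℝ).measurableEmbedding
    rw [← Measure.map_neg_eq_self (volume : Measure ℝ), hneg.integrableOn_map_iff]
    simpa [Function.comp_def] using (integrableOn_Ici_iff_integrableOn_Ioi).2 hIoi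
  simpa using hIic.union hIoi

namespace IsOrlicz

variable {M : ℝ → ℝ}

lemma nonneg (hM : IsOrlicz M) (x : ℝ) : 0 ≤ M x := by
  rcases eq_or_ne x 0 with rfl | hx
  · exact hM.2.2.1.ge
  · exact (hM.2.2.2 x hx).le

lemma continuous (hM : IsOrlicz M) : Continuous M :=
  continuousOn_univ.1 (hM.1.continuousOn isOpen_univ)

lemma mul_abs_sub_one_le (hM : IsOrlicz M) (x : ℝ) : M 1 * (|x| - 1) ≤ M x := by
  have h1 := hM.nonneg 1
  rcases lt_or_ge |x| 1 with hx | hx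
  · nlinarith [hM.nonneg x]
  have hx0 : 0 < |x| := by linarith
  have hscale := hM.1.map_mul_le_of_map_zero hM.2.2.1 (inv_nonneg.2 hx0.le)
    (inv_le_one_of_one_le₀ hx) |x|
  have heven : M |x| = M x := by
    rcases abs_choice x with h | h <;> rw [h]
    exact hM.2.1 x
  rw [inv_mul_cancel₀ hx0.ne', heven, inv_mul_eq_div, le_div_iff₀ hx0] at hscale
  nlinarith

lemma integrable_exp_mul (hM : IsOrlicz M) {α : ℝ} (hα : α < 0) :
    Integrable fun x ↦ exp (α * M x) := by
  have hb : 0 < -α * M 1 := mul_pos (neg_pos.2 hα) (hM.2.2.2 1 one_ne_zero)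
  refine ((integrable_exp_neg_mul_abs hb).const_mul (exp (-α * M 1))).mono'
    (measurable_const.mul hM.continuous.measurable).exp.aestronglyMeasurable
    (ae_of_all _ fun x ↦ ?_)
  rw [norm_of_nonneg (exp_pos _).le, ← exp_add, exp_le_exp]
  nlinarith [hM.mul_abs_sub_one_le x]

lemma mem_interior_integrableExpSet (hM : IsOrlicz M) {α : ℝ} (hα : α < 0) :
    α ∈ interior (integrableExpSet M volume) :=
  interior_mono (s := Set.Iio 0) (fun _ hβ ↦ hM.integrable_exp_mul hβ) (by rwa [interior_Iio])

end IsOrlicz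

def orliczBall (M : ℝ → ℝ) (d : ℕ) (r : ℝ) : Set (Fin d → ℝ) := {x | ∑ i, M (x i) ≤ r}

lemma ofReal_pow_mul_volume_orliczBall_le {M : ℝ → ℝ} (hM : ConvexOn ℝ Set.univ M)
    (h0 : M 0 = 0) (d : ℕ) {c : ℝ} (hc0 : 0 ≤ c) (hc1 : c ≤ 1) (r : ℝ) :
    ENNReal.ofReal (c ^ d) * volume (orliczBall M d r) ≤ volume (orliczBall M d (c * r)) := by
  have hsub : c • orliczBall M d r ⊆ orliczBall M d (c * r) := by
    rintro _ ⟨x, hx, rfl⟩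
    calc ∑ i, M (c * x i) ≤ ∑ i, c * M (x i) :=
          Finset.sum_le_sum fun i _ ↦ hM.map_mul_le_of_map_zero h0 hc0 hc1 _
      _ = c * ∑ i, M (x i) := (Finset.mul_sum ..).symm
      _ ≤ c * r := by gcongr; exact hx
  calc ENNReal.ofReal (c ^ d) * volume (orliczBall M d r) = volume (c • orliczBall M d r) := by
        rw [Measure.addHaar_smul, Module.finrank_fin_fun, abs_of_nonneg (pow_nonneg hc0 d)]
    _ ≤ volume (orliczBall M d (c * r)) := measure_mono hsub

lemma MeasureTheory.Measure.pi_tilted {ι α : Type*} [Fintype ι] [MeasurableSpace α] (μ : Measure α)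
    [SigmaFinite μ] (f : α → ℝ) :
    Measure.pi (fun _ : ι ↦ μ.tilted f) =
      (Measure.pi fun _ : ι ↦ μ).tilted (fun x ↦ ∑ i, f (x i)) := by
  refine Measure.pi_eq fun s hs ↦ ?_
  simp_rw [tilted_apply_eq_ofReal_integral' _ (MeasurableSet.univ_pi hs),
    tilted_apply_eq_ofReal_integral' _ (hs _), Real.exp_sum, integral_div,
    Measure.restrict_pi_pi]
  rw [integral_fintype_prod_eq_prod (fun _ y ↦ exp (f y)),
    integral_fintype_prod_eq_pow (fun y ↦ exp (f y)),
    ← ENNReal.ofReal_prod_of_nonneg fun _ _ ↦ by positivity, Finset.prod_div_distrib,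
    Finset.prod_const, Finset.card_univ]

lemma pi_meas_sum_ge_le_variance_div_sq {Ω : Type*} [MeasurableSpace Ω] {μ : Measure Ω}
    [IsProbabilityMeasure μ] {Y : Ω → ℝ} (hY : MemLp Y 2 μ) {n : ℕ} (hn : 0 < n) {δ : ℝ}
    (hδ : 0 < δ) :
    Measure.pi (fun _ : Fin n ↦ μ) {x | n * δ ≤ |∑ i, Y (x i) - n * μ[Y]|}
      ≤ ENNReal.ofReal (Var[Y; μ] / (n * δ ^ 2)) := by
  set P := Measure.pi (fun _ : Fin n ↦ μ)
  have hYi (i : Fin n) : MemLp (fun x : Fin n → Ω ↦ Y (x i)) 2 P :=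
    hY.comp_measurePreserving (measurePreserving_eval _ i)
  have hS : MemLp (fun x ↦ ∑ i, Y (x i)) 2 P := memLp_finsetSum _ fun i _ ↦ hYi i
  have hmean : ∫ x, ∑ i, Y (x i) ∂P = n * μ[Y] := by
    rw [integral_finsetSum _ fun i _ ↦ (hYi i).integrable one_le_two]
    simp [P, integral_comp_eval (μ := fun _ : Fin n ↦ μ) hY.1]
  have hvar : Var[fun x ↦ ∑ i, Y (x i); P] = n * Var[Y; μ] := by
    have := variance_sum_pi (μ := fun _ : Fin n ↦ μ) fun _ ↦ hY
    simp only [Finset.sum_const, Finset.card_univ, Fintype.card_fin, nsmul_eq_mul] at this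
    rw [← this]
    congr 1
    ext x
    simp
  calc P {x | n * δ ≤ |∑ i, Y (x i) - n * μ[Y]|}
      = P {x | n * δ ≤ |∑ i, Y (x i) - ∫ x, ∑ i, Y (x i) ∂P|} := by rw [hmean]
    _ ≤ ENNReal.ofReal (Var[fun x ↦ ∑ i, Y (x i); P] / (n * δ) ^ 2) :=
      meas_ge_le_variance_div_sq hS (by positivity)
    _ = ENNReal.ofReal (Var[Y; μ] / (n * δ ^ 2)) := by
      rw [hvar]; congr 1; field_simp

lemma eventually_inv_two_le_pi_abs_sum_sub_lt {Ω : Type*} [MeasurableSpace Ω] {μ : Measure Ω}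
    [IsProbabilityMeasure μ] {Y : Ω → ℝ} (hY : MemLp Y 2 μ) {δ : ℝ} (hδ : 0 < δ) :
    ∀ᶠ n : ℕ in atTop,
      2⁻¹ ≤ Measure.pi (fun _ : Fin n ↦ μ) {x | |∑ i, Y (x i) - n * μ[Y]| < n * δ} := by
  filter_upwards [eventually_gt_atTop 0,
    tendsto_natCast_atTop_atTop.eventually_ge_atTop (2 * Var[Y; μ] / δ ^ 2)] with n hn hnV
  set P := Measure.pi fun _ : Fin n ↦ μ
  set A := {x : Fin n → Ω | |∑ i, Y (x i) - n * μ[Y]| < n * δ}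
  have hAc : P Aᶜ ≤ 2⁻¹ := by
    have hAc_eq : Aᶜ = {x | n * δ ≤ |∑ i, Y (x i) - n * μ[Y]|} := by
      ext x
      simp [A]
    rw [hAc_eq, ← ENNReal.ofReal_ofNat 2, ← ENNReal.ofReal_inv_of_pos two_pos]
    refine (pi_meas_sum_ge_le_variance_div_sq hY hn hδ).trans (ENNReal.ofReal_le_ofReal ?_)
    rw [div_le_iff₀ (by positivity)]
    rw [div_le_iff₀ (by positivity)] at hnV
    linarith
  have h := measure_univ_le_add_compl (μ := P) A
  rw [measure_univ] at h
  rw [← ENNReal.one_sub_inv_two, tsub_le_iff_right]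
  exact h.trans (by gcongr)

section TiltedProduct

variable {X : ℝ → ℝ} {t : ℝ} {d : ℕ} {s : Set (Fin d → ℝ)}

lemma pi_tilted_apply :
    Measure.pi (fun _ : Fin d ↦ volume.tilted (t * X ·)) s
      = ∫⁻ x in s, ENNReal.ofReal (exp (t * ∑ i, X (x i)) / mgf X volume t ^ d) := by
  have hZ : ∫ x : Fin d → ℝ, exp (∑ i, t * X (x i)) = mgf X volume t ^ d := by
    simp_rw [exp_sum]
    rw [integral_fintype_prod_volume_eq_pow (fun y ↦ exp (t * X y)), Fintype.card_fin]
    rfl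
  rw [Measure.pi_tilted, ← volume_pi, tilted_apply, hZ]
  simp_rw [Finset.mul_sum]

lemma ofReal_mul_volume_le_pi_tilted (hX : Measurable X) (ht : t ≤ 0) {b : ℝ}
    (hs : ∀ x ∈ s, ∑ i, X (x i) ≤ b) :
    ENNReal.ofReal (exp (t * b) / mgf X volume t ^ d) * volume s
      ≤ Measure.pi (fun _ : Fin d ↦ volume.tilted (t * X ·)) s := by
  rw [pi_tilted_apply, ← setLIntegral_const]
  refine setLIntegral_mono (by fun_prop) fun x hx ↦ ?_
  gcongr ENNReal.ofReal (exp ?_ / _)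
  exacts [pow_nonneg mgf_nonneg _, mul_le_mul_of_nonpos_left (hs x hx) ht]

lemma pi_tilted_le_ofReal_mul_volume (ht : t ≤ 0) {a : ℝ} (hs : ∀ x ∈ s, a ≤ ∑ i, X (x i)) :
    Measure.pi (fun _ : Fin d ↦ volume.tilted (t * X ·)) s
      ≤ ENNReal.ofReal (exp (t * a) / mgf X volume t ^ d) * volume s := by
  rw [pi_tilted_apply, ← setLIntegral_const]
  refine setLIntegral_mono measurable_const fun x hx ↦ ?_
  gcongr ENNReal.ofReal (exp ?_ / _)
  exacts [pow_nonneg mgf_nonneg _, mul_le_mul_of_nonpos_left (hs x hx) ht]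

end TiltedProduct

section OrliczBallBounds

variable {X : ℝ → ℝ} {t : ℝ}

lemma inv_exp_mul_div_mgf_pow (hint : Integrable fun x ↦ exp (t * X x)) (d : ℕ) (r : ℝ) :
    (exp (t * r) / mgf X volume t ^ d)⁻¹ = exp (d * cgf X volume t - t * r) := by
  rw [inv_div, exp_sub, exp_nat_mul, cgf, exp_log (mgf_pos' (NeZero.ne _) hint)]

lemma volume_orliczBall_le (hX : Measurable X) (hint : Integrable fun x ↦ exp (t * X x))
    (ht : t ≤ 0) (d : ℕ) (r : ℝ) :
    volume (orliczBall X d r) ≤ ENNReal.ofReal (exp (d * cgf X volume t - t * r)) := by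
  have := isProbabilityMeasure_tilted hint
  have hk : 0 < exp (t * r) / mgf X volume t ^ d := by
    have := mgf_pos' (NeZero.ne volume) hint
    positivity
  rw [← inv_exp_mul_div_mgf_pow hint, ENNReal.ofReal_inv_of_pos hk,
    ENNReal.le_inv_iff_mul_le, mul_comm]
  exact (ofReal_mul_volume_le_pi_tilted hX ht fun x hx ↦ hx).trans prob_le_one

lemma eventually_ofReal_exp_le_volume_orliczBall_add
    (ht : t ∈ interior (integrableExpSet X volume)) (ht0 : t ≤ 0) {δ : ℝ} (hδ : 0 < δ) :
    ∀ᶠ d : ℕ in atTop,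
      ENNReal.ofReal (exp (d * cgf X volume t - t * (d * (deriv (cgf X volume) t - δ))) / 2)
        ≤ volume (orliczBall X d (d * (deriv (cgf X volume) t + δ))) := by
  set m := deriv (cgf X volume) t
  have hint : Integrable fun x ↦ exp (t * X x) := interior_subset (s := integrableExpSet X _) ht
  have := isProbabilityMeasure_tilted hint
  filter_upwards [eventually_inv_two_le_pi_abs_sum_sub_lt (memLp_tilted_mul ht 2) hδ] with d hA
  rw [integral_tilted_mul_self ht] at hA
  set A := {x : Fin d → ℝ | |∑ i, X (x i) - d * m| < d * δ}
  have hdens := pi_tilted_le_ofReal_mul_volume (X := X) ht0 (s := A) (a := d * (m - δ))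
    fun x (hx : |∑ i, X (x i) - d * m| < d * δ) ↦ by linarith [(abs_lt.1 hx).1]
  have hsub : A ⊆ orliczBall X d (d * (m + δ)) := fun x (hx : |∑ i, X (x i) - d * m| < d * δ) ↦
    show ∑ i, X (x i) ≤ d * (m + δ) by linarith [(abs_lt.1 hx).2]
  set k := exp (t * (d * (m - δ))) / mgf X volume t ^ d
  have hk : 0 < k := by
    have := mgf_pos' (NeZero.ne volume) hint
    positivity
  calc ENNReal.ofReal (exp (d * cgf X volume t - t * (d * (m - δ))) / 2)
      = ENNReal.ofReal k⁻¹ * 2⁻¹ := by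
        rw [inv_exp_mul_div_mgf_pow hint, ENNReal.ofReal_div_of_pos two_pos, div_eq_mul_inv,
          ENNReal.ofReal_ofNat]
    _ ≤ ENNReal.ofReal k⁻¹ * (ENNReal.ofReal k * volume (orliczBall X d (d * (m + δ)))) := by
        gcongr
        exact hA.trans (hdens.trans (by gcongr))
    _ = volume (orliczBall X d (d * (m + δ))) := by
        rw [← mul_assoc, ← ENNReal.ofReal_mul (inv_nonneg.2 hk.le), inv_mul_cancel₀ hk.ne',
          ENNReal.ofReal_one, one_mul]

end OrliczBallBounds

lemma IsOrlicz.eventually_ofReal_le_volume_orliczBall {M : ℝ → ℝ} (hM : IsOrlicz M)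
    {α R δ : ℝ} (hα : α < 0) (hR : 0 < R) (hδ : 0 < δ) (hder : deriv (cgf M volume) α = R) :
    ∀ᶠ d : ℕ in atTop,
      ENNReal.ofReal (1 / 2 * exp (d * (cgf M volume α - α * R + (log (R / (R + δ)) + α * δ))))
        ≤ volume (orliczBall M d (d * R)) := by
  have hq : 0 < R / (R + δ) := by positivity
  have hpow (d : ℕ) : (R / (R + δ)) ^ d = exp (d * log (R / (R + δ))) := by
    rw [exp_nat_mul, exp_log hq]
  filter_upwards [eventually_ofReal_exp_le_volume_orliczBall_add
    (hM.mem_interior_integrableExpSet hα) hα.le hδ] with d hd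
  rw [hder] at hd
  have hball : R / (R + δ) * (d * (R + δ)) = d * R := by
    field_simp
  calc ENNReal.ofReal (1 / 2 * exp (d * (cgf M volume α - α * R + (log (R / (R + δ)) + α * δ))))
      = ENNReal.ofReal ((R / (R + δ)) ^ d)
          * ENNReal.ofReal (exp (d * cgf M volume α - α * (d * (R - δ))) / 2) := by
        rw [← ENNReal.ofReal_mul (pow_nonneg hq.le d), hpow, mul_div_assoc', ← exp_add,
          one_div_mul_eq_div]
        congr 3
        ring
    _ ≤ ENNReal.ofReal ((R / (R + δ)) ^ d) * volume (orliczBall M d (d * (R + δ))) := by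
        gcongr
    _ ≤ volume (orliczBall M d (d * R)) := by
        rw [← hball]
        exact ofReal_pow_mul_volume_orliczBall_le hM.1 hM.2.2.1 d hq.le
          (div_le_one_of_le₀ (by linarith) (by linarith)) _

lemma tendsto_inv_mul_log_toReal_of_exp_bounds {v : ℕ → ℝ≥0∞} {c : ℝ}
    (hup : ∀ d : ℕ, v d ≤ ENNReal.ofReal (exp (d * c)))
    (hlow : ∀ ε > 0, ∃ K > 0, ∀ᶠ d : ℕ in atTop, ENNReal.ofReal (K * exp (d * (c - ε))) ≤ v d) :
    Tendsto (fun d : ℕ ↦ (1 / d : ℝ) * log (v d).toReal) atTop (𝓝 c) ∧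
      Tendsto (fun d : ℕ ↦ (v d).toReal ^ (1 / d : ℝ)) atTop (𝓝 (exp c)) := by
  have hup' (d : ℕ) : (v d).toReal ≤ exp (d * c) :=
    ENNReal.toReal_le_of_le_ofReal (exp_pos _).le (hup d)
  have hlow' (ε : ℝ) (hε : 0 < ε) :
      ∃ K > 0, ∀ᶠ d : ℕ in atTop, K * exp (d * (c - ε)) ≤ (v d).toReal := by
    obtain ⟨K, hK, hKd⟩ := hlow ε hε
    refine ⟨K, hK, hKd.mono fun d hd ↦ ?_⟩
    exact (ENNReal.ofReal_le_iff_le_toReal (ne_top_of_le_ne_top ENNReal.ofReal_ne_top (hup d))).1 hd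
  have hpos : ∀ᶠ d : ℕ in atTop, 0 < (v d).toReal := by
    obtain ⟨K, hK, hKd⟩ := hlow' 1 one_pos
    exact hKd.mono fun d hd ↦ lt_of_lt_of_le (by positivity) hd
  have hlog : Tendsto (fun d : ℕ ↦ (1 / d : ℝ) * log (v d).toReal) atTop (𝓝 c) := by
    refine tendsto_order.2 ⟨fun a ha ↦ ?_, fun b hb ↦ ?_⟩
    · obtain ⟨K, hK, hKd⟩ := hlow' ((c - a) / 2) (by linarith)
      have hlim : Tendsto (fun d : ℕ ↦ log K / d + (c - (c - a) / 2)) atTop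
          (𝓝 (c - (c - a) / 2)) := by
        simpa using (tendsto_const_div_atTop_nhds_zero_nat (log K)).add_const (c - (c - a) / 2)
      filter_upwards [hKd, hlim.eventually (lt_mem_nhds (show a < c - (c - a) / 2 by linarith)),
        eventually_gt_atTop 0] with d hd hlt hd0
      calc a < log K / d + (c - (c - a) / 2) := hlt
        _ = (1 / d) * log (K * exp (d * (c - (c - a) / 2))) := by
          rw [log_mul hK.ne' (exp_pos _).ne', log_exp]
          field_simp
        _ ≤ (1 / d) * log (v d).toReal := by gcongr
    · filter_upwards [hpos, eventually_gt_atTop 0] with d hd hd0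
      calc (1 / d) * log (v d).toReal ≤ (1 / d) * log (exp (d * c)) := by gcongr; exact hup' d
        _ = c := by rw [log_exp]; field_simp
        _ < b := hb
  refine ⟨hlog, ((continuous_exp.tendsto c).comp hlog).congr' ?_⟩
  filter_upwards [hpos] with d hd
  simp [rpow_def_of_pos hd, mul_comm]

theorem stmt12 (R : ℝ) (hR : 0 < R) (M : ℝ → ℝ) (hM : IsOrlicz M)
    (φ : ℝ → ℝ) (hφ : ∀ α, φ α = Real.log (∫ x : ℝ, Real.exp (α * M x)))
    (αs : ℝ) (hαs : αs < 0) (hder : deriv φ αs = R) :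
    Tendsto (fun d : ℕ =>
        (1 / d : ℝ) * Real.log (volume {x : Fin d → ℝ | ∑ i, M (x i) ≤ d * R}).toReal)
      atTop (nhds (φ αs - αs * R)) ∧
    Tendsto (fun d : ℕ =>
        ((volume {x : Fin d → ℝ | ∑ i, M (x i) ≤ d * R}).toReal) ^ (1 / d : ℝ))
      atTop (nhds (Real.exp (φ αs - αs * R))) := by
  have hφ_eq : φ = cgf M volume := funext hφ
  subst hφ_eq
  have hint := hM.integrable_exp_mul hαs
  refine tendsto_inv_mul_log_toReal_of_exp_bounds (v := fun d ↦ volume (orliczBall M d (d * R)))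
    (fun d ↦ (volume_orliczBall_le hM.continuous.measurable hint hαs.le d _).trans_eq
      (by ring_nf)) fun ε hε ↦ ?_
  have hgap : Tendsto (fun δ ↦ log (R / (R + δ)) + αs * δ) (𝓝[>] 0) (𝓝 0) := by
    have : ContinuousAt (fun δ ↦ log (R / (R + δ)) + αs * δ) 0 := by
      fun_prop (disch := simp [hR.ne'])
    simpa [hR.ne'] using this.tendsto.mono_left nhdsWithin_le_nhds
  obtain ⟨δ, hδε, hδ⟩ :=
    ((hgap.eventually (lt_mem_nhds (neg_lt_zero.2 hε))).and self_mem_nhdsWithin).exists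
  refine ⟨1 / 2, one_half_pos, ?_⟩
  filter_upwards [hM.eventually_ofReal_le_volume_orliczBall hαs hR hδ hder] with d hd
  refine le_trans (ENNReal.ofReal_le_ofReal ?_) hd
  gcongr
  nlinarith [mul_le_mul_of_nonneg_left hδε.le (Nat.cast_nonneg (α := ℝ) d)]
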